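/- All-time marginal fluctuation symmetry of the moment generating function (marginal FR theorem): Let M̃ q' be the tilted operator built from W̃ := P * (M Q)ᵀ * P⁻¹ in the same way M is built from W, i.e. (M̃ q') i_μ j_μ = W̃ i_μ j_μ * Real.exp (−q' μ), (M̃ q') j_μ i_μ = W̃ j_μ i_μ * Real.exp (q' μ), and M̃ q' agrees with W̃ elsewhere. Then for every t : ℝ and every q : Fin m → ℝ, ∑ i, (Matrix.exp (t • M q) *ᵥ p) i = ∑ i, (Matrix.exp (t • M̃ (Q − q)) *ᵥ p) i; that is, when the initial state is the stalling state p, the moment generating functions of the observable currents for the forward dynamics at counting fields q and for the hidden time-reversal dynamics at counting fields Q − q coincide at all times. -/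

import Mathlib

open Matrix

/-! The tilted hidden time reversal at `Q - q` is the diagonal conjugate `P (M q)ᵀ P⁻¹`: transposing
swaps the two directions of every observable edge, which turns the tilt by `Q` into a tilt by `-Q`,
and tilts compose additively. Hence `exp (t • M̃ (Q - q)) = P (exp (t • M q))ᵀ P⁻¹`, and
`𝟙ᵀ P Eᵀ P⁻¹ p = pᵀ Eᵀ 𝟙 = 𝟙ᵀ E p` for every matrix `E`. -/

structure IsTilted {ι κ : Type*} (ei ej : κ → ι) (W : Matrix ι ι ℝ) (q : κ → ℝ)
    (A : Matrix ι ι ℝ) : Prop where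
  apply_fwd : ∀ μ, A (ei μ) (ej μ) = W (ei μ) (ej μ) * Real.exp (-q μ)
  apply_bwd : ∀ μ, A (ej μ) (ei μ) = W (ej μ) (ei μ) * Real.exp (q μ)
  apply_of_forall_ne : ∀ i j, (∀ μ, ¬(i = ei μ ∧ j = ej μ) ∧ ¬(i = ej μ ∧ j = ei μ)) →
    A i j = W i j

namespace IsTilted

variable {ι κ : Type*} {ei ej : κ → ι} {W A B : Matrix ι ι ℝ} {q r : κ → ℝ}

theorem unique (hA : IsTilted ei ej W q A) (hB : IsTilted ei ej W q B) : A = B := by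
  ext i j
  by_cases hf : ∃ μ, i = ei μ ∧ j = ej μ
  · obtain ⟨μ, rfl, rfl⟩ := hf
    rw [hA.apply_fwd, hB.apply_fwd]
  by_cases hb : ∃ μ, i = ej μ ∧ j = ei μ
  · obtain ⟨μ, rfl, rfl⟩ := hb
    rw [hA.apply_bwd, hB.apply_bwd]
  have h : ∀ μ, ¬(i = ei μ ∧ j = ej μ) ∧ ¬(i = ej μ ∧ j = ei μ) :=
    fun μ => ⟨fun h => hf ⟨μ, h⟩, fun h => hb ⟨μ, h⟩⟩
  rw [hA.apply_of_forall_ne i j h, hB.apply_of_forall_ne i j h]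

theorem trans (hA : IsTilted ei ej W q A) (hB : IsTilted ei ej A r B) :
    IsTilted ei ej W (q + r) B where
  apply_fwd μ := by
    rw [hB.apply_fwd, hA.apply_fwd, mul_assoc, ← Real.exp_add, Pi.add_apply, neg_add]
  apply_bwd μ := by
    rw [hB.apply_bwd, hA.apply_bwd, mul_assoc, ← Real.exp_add, Pi.add_apply]
  apply_of_forall_ne i j h := by
    rw [hB.apply_of_forall_ne i j h, hA.apply_of_forall_ne i j h]

theorem transpose (hA : IsTilted ei ej W q A) : IsTilted ei ej Wᵀ (-q) Aᵀ where
  apply_fwd μ := by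
    rw [transpose_apply, transpose_apply, hA.apply_bwd, Pi.neg_apply, neg_neg]
  apply_bwd μ := by
    rw [transpose_apply, transpose_apply, hA.apply_fwd, Pi.neg_apply]
  apply_of_forall_ne i j h :=
    hA.apply_of_forall_ne j i fun μ => ⟨fun h' => (h μ).2 h'.symm, fun h' => (h μ).1 h'.symm⟩

theorem diagonal_mul_mul_diagonal [DecidableEq ι] [Fintype ι] (hA : IsTilted ei ej W q A)
    (d d' : ι → ℝ) :
    IsTilted ei ej (diagonal d * W * diagonal d') q (diagonal d * A * diagonal d') where
  apply_fwd μ := by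
    simp only [mul_diagonal, diagonal_mul, hA.apply_fwd]
    ring
  apply_bwd μ := by
    simp only [mul_diagonal, diagonal_mul, hA.apply_bwd]
    ring
  apply_of_forall_ne i j h := by
    simp only [mul_diagonal, diagonal_mul, hA.apply_of_forall_ne i j h]

end IsTilted

section DiagonalConjTranspose

variable {ι : Type*} [Fintype ι] [DecidableEq ι] {p : ι → ℝ}

theorem sum_diagonal_mul_transpose_mul_inv_mulVec (hp : ∀ i, p i ≠ 0) (A : Matrix ι ι ℝ) :
    ∑ i, ((diagonal p * Aᵀ * (diagonal p)⁻¹) *ᵥ p) i = ∑ i, (A *ᵥ p) i := by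
  have hinv : (diagonal p)⁻¹ *ᵥ p = 1 := by
    have hp' : IsUnit p := Pi.isUnit_iff.mpr fun i => (hp i).isUnit
    ext i
    simp [inv_diagonal, mulVec_diagonal, Ring.inverse, hp', hp]
  rw [← mulVec_mulVec, hinv]
  simp only [mulVec, dotProduct, diagonal_mul, transpose_apply, Pi.one_apply, mul_one]
  rw [Finset.sum_comm]
  simp only [mul_comm]

theorem sum_exp_smul_diagonal_mul_transpose_mul_inv_mulVec (hp : ∀ i, p i ≠ 0)
    (A : Matrix ι ι ℝ) (t : ℝ) :
    ∑ i, (NormedSpace.exp (t • (diagonal p * Aᵀ * (diagonal p)⁻¹)) *ᵥ p) i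
      = ∑ i, (NormedSpace.exp (t • A) *ᵥ p) i := by
  have hP : IsUnit (diagonal p) := isUnit_diagonal.mpr (Pi.isUnit_iff.mpr fun i => (hp i).isUnit)
  have hsmul : t • (diagonal p * Aᵀ * (diagonal p)⁻¹) = diagonal p * (t • A)ᵀ * (diagonal p)⁻¹ := by
    rw [transpose_smul, Matrix.mul_smul, Matrix.smul_mul]
  rw [hsmul, exp_conj _ _ hP, exp_transpose, sum_diagonal_mul_transpose_mul_inv_mulVec hp]

end DiagonalConjTranspose

theorem all_time_marginal_fluctuation_symmetry {n m : ℕ}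
    (W : Matrix (Fin n) (Fin n) ℝ)
    (ei ej : Fin m → Fin n)
    (p : Fin n → ℝ) (hp1 : ∀ i, 0 < p i)
    (Q : Fin m → ℝ)
    (M : (Fin m → ℝ) → Matrix (Fin n) (Fin n) ℝ)
    (hM1 : ∀ q μ, M q (ei μ) (ej μ) = W (ei μ) (ej μ) * Real.exp (-q μ))
    (hM2 : ∀ q μ, M q (ej μ) (ei μ) = W (ej μ) (ei μ) * Real.exp (q μ))
    (hM3 : ∀ q i j, (∀ μ, ¬(i = ei μ ∧ j = ej μ) ∧ ¬(i = ej μ ∧ j = ei μ)) → M q i j = W i j)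
    (Wt : Matrix (Fin n) (Fin n) ℝ)
    (hWt : Wt = Matrix.diagonal p * (M Q)ᵀ * (Matrix.diagonal p)⁻¹)
    (Mt : (Fin m → ℝ) → Matrix (Fin n) (Fin n) ℝ)
    (hMt1 : ∀ q μ, Mt q (ei μ) (ej μ) = Wt (ei μ) (ej μ) * Real.exp (-q μ))
    (hMt2 : ∀ q μ, Mt q (ej μ) (ei μ) = Wt (ej μ) (ei μ) * Real.exp (q μ))
    (hMt3 : ∀ q i j, (∀ μ, ¬(i = ei μ ∧ j = ej μ) ∧ ¬(i = ej μ ∧ j = ei μ)) →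
      Mt q i j = Wt i j) :
    ∀ (t : ℝ) (q : Fin m → ℝ),
      ∑ i, (NormedSpace.exp (t • M q) *ᵥ p) i
        = ∑ i, (NormedSpace.exp (t • Mt (Q - q)) *ᵥ p) i := by
  intro t q
  have hM : ∀ q, IsTilted ei ej W q (M q) := fun q => ⟨hM1 q, hM2 q, hM3 q⟩
  have hMt : ∀ q, IsTilted ei ej Wt q (Mt q) := fun q => ⟨hMt1 q, hMt2 q, hMt3 q⟩
  have hreversal : Mt (Q - q) = diagonal p * (M q)ᵀ * (diagonal p)⁻¹ := by
    rw [inv_diagonal] at hWt ⊢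
    have hQq := (hM Q).transpose.diagonal_mul_mul_diagonal p (Ring.inverse p) |>.trans (hWt ▸ hMt (Q - q))
    rw [show -Q + (Q - q) = -q by abel] at hQq
    exact hQq.unique ((hM q).transpose.diagonal_mul_mul_diagonal p (Ring.inverse p))
  rw [hreversal, sum_exp_smul_diagonal_mul_transpose_mul_inv_mulVec fun i => (hp1 i).ne']
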